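/- Let C be a cartesian category, G an internal group such that G* : C → [G, C] has a left adjoint Σ_G and the adjunction Σ_G ⊣ G* is stably Frobenius, and let X be an object of C. For an adjunction L ⊣ R : C/X ⇄ [G, C] over C (i.e. Σ_G ∘ L = Σ_X, where Σ_X : C/X → C is the domain functor), the following are equivalent: (1) L ⊣ R is stably Frobenius; (2) the sliced adjunction L_{G*X} ⊣ R_{G*X} satisfies Frobenius reciprocity; (3) the sliced adjunction L_{G*Z} ⊣ R_{G*Z} satisfies Frobenius reciprocity for every object Z of C. -/

import Mathlib

open CategoryTheory CategoryTheory.Limits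

universe v u v₂ u₂ v₃ u₃

attribute [local simp] prod.lift_fst prod.lift_snd prod.lift_fst_assoc prod.lift_snd_assoc

noncomputable section

namespace PrincipalBundles

variable {C : Type u} [Category.{v} C] [HasFiniteLimits C]

/-- An internal group in a cartesian category `C`: an object `G` with multiplication
`m : G ⨯ G ⟶ G`, unit `e : 1 ⟶ G` and inverse `i : G ⟶ G` satisfying the group axioms. -/
structure InternalGroup (C : Type u) [Category.{v} C] [HasFiniteLimits C] where
  G : C
  m : G ⨯ G ⟶ G
  e : ⊤_ C ⟶ G
  i : G ⟶ G
  mul_assoc' : (prod.associator G G G).inv ≫ prod.map m (𝟙 G) ≫ m = prod.map (𝟙 G) m ≫ m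
  one_mul' : prod.lift (terminal.from G ≫ e) (𝟙 G) ≫ m = 𝟙 G
  mul_one' : prod.lift (𝟙 G) (terminal.from G ≫ e) ≫ m = 𝟙 G
  inv_mul' : prod.lift i (𝟙 G) ≫ m = terminal.from G ≫ e
  mul_inv' : prod.lift (𝟙 G) i ≫ m = terminal.from G ≫ e

namespace InternalGroup

variable (Gr : InternalGroup C)

/-- Multiplication of generalized elements. -/
theorem one_mul_elt {T : C} (b : T ⟶ Gr.G) :
    prod.lift (terminal.from T ≫ Gr.e) b ≫ Gr.m = b := by
  have h : prod.lift (terminal.from T ≫ Gr.e) b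
      = b ≫ prod.lift (terminal.from Gr.G ≫ Gr.e) (𝟙 Gr.G) := by
    rw [prod.comp_lift, ← Category.assoc, terminal.comp_from, Category.comp_id]
  rw [h, Category.assoc, Gr.one_mul', Category.comp_id]

theorem mul_one_elt {T : C} (a : T ⟶ Gr.G) :
    prod.lift a (terminal.from T ≫ Gr.e) ≫ Gr.m = a := by
  have h : prod.lift a (terminal.from T ≫ Gr.e)
      = a ≫ prod.lift (𝟙 Gr.G) (terminal.from Gr.G ≫ Gr.e) := by
    rw [prod.comp_lift, ← Category.assoc, terminal.comp_from, Category.comp_id]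
  rw [h, Category.assoc, Gr.mul_one', Category.comp_id]

theorem mul_assoc_elt {T : C} (a b c : T ⟶ Gr.G) :
    prod.lift (prod.lift a b ≫ Gr.m) c ≫ Gr.m = prod.lift a (prod.lift b c ≫ Gr.m) ≫ Gr.m := by
  have h1 : prod.lift (prod.lift a b ≫ Gr.m) c
      = prod.lift (prod.lift a b) c ≫ prod.map Gr.m (𝟙 _) := by simp
  have h2 : prod.lift (prod.lift a b) c
      = prod.lift a (prod.lift b c) ≫ (prod.associator Gr.G Gr.G Gr.G).inv := by
    ext <;> simp
  have h3 : prod.lift a (prod.lift b c ≫ Gr.m)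
      = prod.lift a (prod.lift b c) ≫ prod.map (𝟙 _) Gr.m := by simp
  rw [h1, h2, h3, Category.assoc, Category.assoc, Gr.mul_assoc', ← Category.assoc]

theorem inv_mul_elt {T : C} (a : T ⟶ Gr.G) :
    prod.lift (a ≫ Gr.i) a ≫ Gr.m = terminal.from T ≫ Gr.e := by
  have h : prod.lift (a ≫ Gr.i) a = a ≫ prod.lift Gr.i (𝟙 Gr.G) := by
    rw [prod.comp_lift, Category.comp_id]
  rw [h, Category.assoc, Gr.inv_mul', ← Category.assoc, terminal.comp_from]

theorem mul_inv_elt {T : C} (a : T ⟶ Gr.G) :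
    prod.lift a (a ≫ Gr.i) ≫ Gr.m = terminal.from T ≫ Gr.e := by
  have h : prod.lift a (a ≫ Gr.i) = a ≫ prod.lift (𝟙 Gr.G) Gr.i := by
    rw [prod.comp_lift, Category.comp_id]
  rw [h, Category.assoc, Gr.mul_inv', ← Category.assoc, terminal.comp_from]

/-- The monad `X ↦ G ⨯ X` on `C` associated to an internal group `G`; its unit at `X` is
`(e ∘ !, id) : X ⟶ G ⨯ X` and its multiplication at `X` is `m ⨯ id : G ⨯ (G ⨯ X) ⟶ G ⨯ X`. -/
def actionMonad : Monad C where
  toFunctor := prod.functor.obj Gr.G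
  η :=
    { app := fun X => prod.lift (terminal.from X ≫ Gr.e) (𝟙 X)
      naturality := by
        intro X Y f
        dsimp [prod.functor]
        ext
        · simp [← Category.assoc, terminal.comp_from]
        · simp }
  μ :=
    { app := fun X => (prod.associator Gr.G Gr.G X).inv ≫ prod.map Gr.m (𝟙 X)
      naturality := by
        intro X Y f
        dsimp [prod.functor]
        ext
        · simp [prod.comp_lift_assoc]
        · simp }
  assoc := by
    intro X
    dsimp [prod.functor]
    ext
    · simp only [prod.comp_lift_assoc, Category.assoc, prod.map_fst, prod.map_snd,
        prod.lift_fst, prod.lift_snd, Category.comp_id, Category.id_comp,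
        prod.associator_inv, prod.lift_fst_assoc, prod.comp_lift, prod.map_fst_assoc,
        prod.map_snd_assoc, prod.lift_snd_assoc]
      exact (Gr.mul_assoc_elt _ _ _).symm
    · simp
  left_unit := by
    intro X
    dsimp [prod.functor]
    ext
    · simp [prod.comp_lift_assoc, Gr.one_mul_elt]
    · simp
  right_unit := by
    intro X
    dsimp [prod.functor]
    ext
    · simp only [prod.comp_lift_assoc, Category.assoc, prod.map_fst, prod.map_snd,
        prod.lift_fst, prod.lift_snd, Category.comp_id, Category.id_comp,
        prod.associator_inv, prod.lift_fst_assoc]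
      simp only [prod.map_snd_assoc, prod.lift_fst_assoc, Category.assoc, prod.lift_fst]
      rw [← Category.assoc prod.snd, terminal.comp_from]
      exact Gr.mul_one_elt prod.fst
    · simp

/-- The category `[G, C]` of `G`-objects and `G`-homomorphisms: objects of `C` equipped with
a `G`-action `a : G ⨯ A ⟶ A` satisfying the unit and associativity laws, with morphisms the
morphisms of `C` commuting with the actions.  (Implemented as the Eilenberg–Moore category of
the monad `G ⨯ (-)`; the algebra axioms are literally the action axioms, and algebra morphisms
are literally the `G`-homomorphisms.) -/
abbrev GObject := (actionMonad Gr).Algebra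

instance : HasFiniteLimits (GObject Gr) :=
  ⟨fun _ _ _ => ⟨fun D => Monad.hasLimit_of_comp_forget_hasLimit D⟩⟩

variable {Gr}

/-- The action of a `G`-object, seen as a morphism `G ⨯ A ⟶ A` in `C`. -/
def act (A : GObject Gr) : Gr.G ⨯ A.A ⟶ A.A := A.a

/-- Elementwise unit law for an action. -/
theorem act_one_elt (A : GObject Gr) {T : C} (y : T ⟶ A.A) :
    prod.lift (terminal.from T ≫ Gr.e) y ≫ act A = y := by
  have h : prod.lift (terminal.from T ≫ Gr.e) y
      = y ≫ prod.lift (terminal.from A.A ≫ Gr.e) (𝟙 A.A) := by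
    rw [prod.comp_lift, ← Category.assoc, terminal.comp_from, Category.comp_id]
  have hu := A.unit
  dsimp [actionMonad] at hu
  rw [h, Category.assoc, act]
  erw [hu]
  rw [Category.comp_id]

/-- Elementwise associativity law for an action. -/
theorem act_assoc_elt (A : GObject Gr) {T : C} (a b : T ⟶ Gr.G) (y : T ⟶ A.A) :
    prod.lift (prod.lift a b ≫ Gr.m) y ≫ act A
      = prod.lift a (prod.lift b y ≫ act A) ≫ act A := by
  have ha : (prod.associator Gr.G Gr.G A.A).inv ≫ prod.map Gr.m (𝟙 A.A) ≫ A.a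
      = prod.map (𝟙 Gr.G) A.a ≫ A.a := by
    have ha0 := A.assoc
    dsimp [actionMonad, prod.functor] at ha0
    simp only [Category.assoc] at ha0
    exact ha0
  have h1 : prod.lift (prod.lift a b ≫ Gr.m) y
      = prod.lift (prod.lift a b) y ≫ prod.map Gr.m (𝟙 _) := by simp
  have h2 : prod.lift (prod.lift a b) y
      = prod.lift a (prod.lift b y) ≫ (prod.associator Gr.G Gr.G A.A).inv := by
    ext <;> simp
  have h3 : prod.lift a (prod.lift b y ≫ act A)
      = prod.lift a (prod.lift b y) ≫ prod.map (𝟙 _) (act A) := by simp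
  rw [h1, h2, h3, Category.assoc, Category.assoc, act, ha]
  exact (Category.assoc _ _ _).symm

variable (Gr)

/-- The functor `G* : C ⥤ [G, C]` equipping an object with the trivial action `π₂`. -/
def trivAction : C ⥤ GObject Gr where
  obj X :=
    { A := X
      a := prod.snd
      unit := by simp [actionMonad]; exact prod.lift_snd _ _
      assoc := by simp [actionMonad, prod.functor] }
  map f :=
    { f := f
      h := by simp [actionMonad, prod.functor] }
  map_id X := by ext; rfl
  map_comp f g := by ext; rfl

/-- The `G`-object `(G, m)`: `G` acting on itself by multiplication. -/
def selfAction : GObject Gr where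
  A := Gr.G
  a := Gr.m
  unit := Gr.one_mul'
  assoc := by
    have h := Gr.mul_assoc'
    dsimp [actionMonad, prod.functor]
    simpa [Category.assoc] using h

/-- The product of two `G`-objects: the product in `C` with the componentwise action. -/
def prodGObject (A B : GObject Gr) : GObject Gr where
  A := A.A ⨯ B.A
  a := prod.lift (prod.map (𝟙 Gr.G) prod.fst ≫ act A) (prod.map (𝟙 Gr.G) prod.snd ≫ act B)
  unit := by
    dsimp [actionMonad]
    apply Limits.prod.hom_ext
    · erw [Category.assoc, prod.lift_fst, prod.lift_map_assoc, Category.comp_id, Category.id_comp]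
      exact act_one_elt A (prod.fst : A.A ⨯ B.A ⟶ A.A)
    · erw [Category.assoc, prod.lift_snd, prod.lift_map_assoc, Category.comp_id, Category.id_comp]
      exact act_one_elt B (prod.snd : A.A ⨯ B.A ⟶ B.A)
  assoc := by
    dsimp [actionMonad, prod.functor]
    apply Limits.prod.hom_ext
    · simp only [prod.comp_lift_assoc, Category.assoc, prod.map_fst, prod.map_snd,
        prod.lift_fst, prod.lift_snd, Category.comp_id, Category.id_comp,
        prod.associator_inv, prod.lift_fst_assoc, prod.comp_lift, prod.map_fst_assoc,
        prod.map_snd_assoc, prod.lift_snd_assoc, prod.map_map_assoc, prod.map_map]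
      rw [prod.lift_map_assoc]
      have hR : prod.map (𝟙 Gr.G) (prod.map (𝟙 Gr.G) (prod.fst : A.A ⨯ B.A ⟶ A.A) ≫ act A) ≫
              act A
          = prod.lift (prod.fst : Gr.G ⨯ (Gr.G ⨯ (A.A ⨯ B.A)) ⟶ Gr.G)
              (prod.lift ((prod.snd : Gr.G ⨯ (Gr.G ⨯ (A.A ⨯ B.A)) ⟶ Gr.G ⨯ (A.A ⨯ B.A)) ≫
                  prod.fst)
                ((prod.snd ≫ prod.snd) ≫ prod.fst) ≫ act A) ≫
            act A := by
        congr 1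
        apply Limits.prod.hom_ext
        · simp
        · simp only [prod.map_snd, prod.lift_snd]
          rw [← Category.assoc]
          congr 1
          apply Limits.prod.hom_ext <;> simp
      rw [hR]
      exact act_assoc_elt A prod.fst (prod.snd ≫ prod.fst) ((prod.snd ≫ prod.snd) ≫ prod.fst)
    · simp only [prod.comp_lift_assoc, Category.assoc, prod.map_fst, prod.map_snd,
        prod.lift_fst, prod.lift_snd, Category.comp_id, Category.id_comp,
        prod.associator_inv, prod.lift_fst_assoc, prod.comp_lift, prod.map_fst_assoc,
        prod.map_snd_assoc, prod.lift_snd_assoc, prod.map_map_assoc, prod.map_map]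
      rw [prod.lift_map_assoc]
      have hR : prod.map (𝟙 Gr.G) (prod.map (𝟙 Gr.G) (prod.snd : A.A ⨯ B.A ⟶ B.A) ≫ act B) ≫
              act B
          = prod.lift (prod.fst : Gr.G ⨯ (Gr.G ⨯ (A.A ⨯ B.A)) ⟶ Gr.G)
              (prod.lift ((prod.snd : Gr.G ⨯ (Gr.G ⨯ (A.A ⨯ B.A)) ⟶ Gr.G ⨯ (A.A ⨯ B.A)) ≫
                  prod.fst)
                ((prod.snd ≫ prod.snd) ≫ prod.snd) ≫ act B) ≫
            act B := by
        congr 1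
        apply Limits.prod.hom_ext
        · simp
        · simp only [prod.map_snd, prod.lift_snd]
          rw [← Category.assoc]
          congr 1
          apply Limits.prod.hom_ext <;> simp
      rw [hR]
      exact act_assoc_elt B prod.fst (prod.snd ≫ prod.fst) ((prod.snd ≫ prod.snd) ≫ prod.snd)

variable {Gr}

/-- First projection of the product of `G`-objects. -/
def prodGFst (A B : GObject Gr) : prodGObject Gr A B ⟶ A where
  f := prod.fst
  h := by simp [prodGObject, actionMonad, prod.functor, act]

/-- Second projection of the product of `G`-objects. -/
def prodGSnd (A B : GObject Gr) : prodGObject Gr A B ⟶ B where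
  f := prod.snd
  h := by simp [prodGObject, actionMonad, prod.functor, act]

/-- Functoriality of the product of `G`-objects. -/
def prodGHom {A A' B B' : GObject Gr} (u : A ⟶ A') (v : B ⟶ B') :
    prodGObject Gr A B ⟶ prodGObject Gr A' B' where
  f := prod.map u.f v.f
  h := by
    have hu : prod.map (𝟙 Gr.G) u.f ≫ act A' = act A ≫ u.f := by
      have h0 := u.h; dsimp [actionMonad, prod.functor] at h0; exact h0
    have hv : prod.map (𝟙 Gr.G) v.f ≫ act B' = act B ≫ v.f := by
      have h0 := v.h; dsimp [actionMonad, prod.functor] at h0; exact h0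
    dsimp [prodGObject, actionMonad, prod.functor]
    apply Limits.prod.hom_ext
    · simp only [Category.assoc, prod.lift_fst, prod.map_fst, prod.lift_fst_assoc]
      rw [← Category.assoc, prod.map_map, Category.id_comp, prod.map_fst]
      rw [show prod.map (𝟙 Gr.G) (prod.fst ≫ u.f)
            = prod.map (𝟙 Gr.G) prod.fst ≫ prod.map (𝟙 Gr.G) u.f by
          rw [prod.map_map, Category.comp_id]]
      rw [Category.assoc, hu]
    · simp only [Category.assoc, prod.lift_snd, prod.map_snd, prod.lift_snd_assoc]
      rw [← Category.assoc, prod.map_map, Category.id_comp, prod.map_snd]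
      rw [show prod.map (𝟙 Gr.G) (prod.snd ≫ v.f)
            = prod.map (𝟙 Gr.G) prod.snd ≫ prod.map (𝟙 Gr.G) v.f by
          rw [prod.map_map, Category.comp_id]]
      rw [Category.assoc, hv]

variable (Gr)

/-- The functor `(P, p) ⨯ (-) : [G, C] ⥤ [G, C]`. -/
def prodGFunctor (P : GObject Gr) : GObject Gr ⥤ GObject Gr where
  obj A := prodGObject Gr P A
  map h := prodGHom (𝟙 P) h
  map_id A := by
    apply Monad.Algebra.Hom.ext
    show prod.map (𝟙 P : P ⟶ P).f (𝟙 A : A ⟶ A).f = (𝟙 (prodGObject Gr P A) : _ ⟶ _).f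
    rw [Monad.Algebra.id_f, Monad.Algebra.id_f, Monad.Algebra.id_f, prod.map_id_id]
    rfl
  map_comp f g := by
    apply Monad.Algebra.Hom.ext
    show prod.map (𝟙 P : P ⟶ P).f (f ≫ g).f = (prodGHom (𝟙 P) f ≫ prodGHom (𝟙 P) g).f
    rw [Monad.Algebra.comp_f, Monad.Algebra.comp_f]
    show prod.map (𝟙 P : P ⟶ P).f (f.f ≫ g.f)
        = prod.map (𝟙 P : P ⟶ P).f f.f ≫ prod.map (𝟙 P : P ⟶ P).f g.f
    rw [prod.map_map]
    rw [Monad.Algebra.id_f, Category.comp_id]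

end InternalGroup

open InternalGroup

section Frobenius

variable {D : Type u₂} [Category.{v₂} D] [HasFiniteLimits D]
variable {E : Type u₃} [Category.{v₃} E] [HasFiniteLimits E]

/-- The canonical Frobenius map `L(R X ⨯ W) ⟶ X ⨯ L W` of an adjunction `L ⊣ R`, namely
`(L π₁, L π₂)` followed by `ε_X ⨯ id` where `ε` is the counit. -/
def frobMap {L : D ⥤ E} {R : E ⥤ D} (adj : L ⊣ R) (W : D) (X : E) :
    L.obj (R.obj X ⨯ W) ⟶ X ⨯ L.obj W :=
  prod.lift (L.map prod.fst ≫ adj.counit.app X) (L.map prod.snd)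

/-- An adjunction `L ⊣ R` between cartesian categories satisfies Frobenius reciprocity if
all the canonical maps `L(R X ⨯ W) ⟶ X ⨯ L W` are isomorphisms. -/
def IsFrobenius {L : D ⥤ E} {R : E ⥤ D} (adj : L ⊣ R) : Prop :=
  ∀ (W : D) (X : E), IsIso (frobMap adj W X)

/-- The left adjoint of the adjunction `L ⊣ R` sliced at `X`, sending `g : W ⟶ R X`
to its adjoint transpose `L W ⟶ X`. -/
def slicedL {L : D ⥤ E} {R : E ⥤ D} (adj : L ⊣ R) (X : E) : Over (R.obj X) ⥤ Over X where
  obj W := Over.mk (L.map W.hom ≫ adj.counit.app X)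
  map {W W'} u :=
    Over.homMk (L.map u.left) (by
      dsimp
      rw [← Category.assoc, ← L.map_comp, Over.w u])
  map_id W := by ext; dsimp; simp
  map_comp f g := by ext; dsimp; simp

/-- The right adjoint of the adjunction `L ⊣ R` sliced at `X`, sending `f : Y ⟶ X` to
`R f : R Y ⟶ R X`. -/
def slicedR {L : D ⥤ E} {R : E ⥤ D} (adj : L ⊣ R) (X : E) : Over X ⥤ Over (R.obj X) where
  obj Y := Over.mk (R.map Y.hom)
  map {Y Y'} u :=
    Over.homMk (R.map u.left) (by
      dsimp
      rw [← R.map_comp, Over.w u])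
  map_id Y := by ext; dsimp; simp
  map_comp f g := by ext; dsimp; simp

/-- The sliced adjunction `L_X ⊣ R_X : D / R X ⇄ E / X` of `L ⊣ R` at an object `X`. -/
def slicedAdj {L : D ⥤ E} {R : E ⥤ D} (adj : L ⊣ R) (X : E) : slicedL adj X ⊣ slicedR adj X :=
  Adjunction.mkOfHomEquiv
    { homEquiv := fun W Y =>
        { toFun := fun u => Over.homMk ((adj.homEquiv _ _) u.left) (by
            have hu := Over.w u
            dsimp [slicedL] at hu
            dsimp [slicedR]
            erw [Adjunction.homEquiv_unit, Category.assoc, ← R.map_comp, hu, R.map_comp,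
              adj.unit_naturality_assoc, adj.right_triangle_components, Category.comp_id])
          invFun := fun v => Over.homMk ((adj.homEquiv _ _).symm v.left) (by
            have hv := Over.w v
            dsimp [slicedR] at hv
            dsimp [slicedL]
            erw [Adjunction.homEquiv_counit, Category.assoc, ← adj.counit_naturality,
              ← Category.assoc, ← L.map_comp, hv])
          left_inv := fun u => by ext; exact (adj.homEquiv _ _).left_inv u.left
          right_inv := fun v => by ext; exact (adj.homEquiv _ _).right_inv v.left }
      homEquiv_naturality_left_symm := by
        intro W' W Y f g
        ext
        exact adj.homEquiv_naturality_left_symm f.left g.left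
      homEquiv_naturality_right := by
        intro W Y Y' f g
        ext
        exact adj.homEquiv_naturality_right f.left g.left }

/-- An adjunction between cartesian categories is stably Frobenius if every sliced
adjunction satisfies Frobenius reciprocity. -/
def IsStablyFrobenius {L : D ⥤ E} {R : E ⥤ D} (adj : L ⊣ R) : Prop :=
  ∀ X : E, IsFrobenius (slicedAdj adj X)

end Frobenius

/-- A morphism `f : X ⟶ Y` is an effective descent morphism if the pullback functor
`f* : C/Y ⥤ C/X` is monadic. -/
def EffectiveDescentMorphism {X Y : C} (f : X ⟶ Y) : Prop :=
  Nonempty (MonadicRightAdjoint (Over.pullback f))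

/-- A principal `G`-bundle: a `G`-object `(P, p)` such that `! : P ⟶ 1` is an effective
descent morphism and `(p, π₂) : G ⨯ P ⟶ P ⨯ P` is an isomorphism. -/
def IsPrincipal (Gr : InternalGroup C) (P : InternalGroup.GObject Gr) : Prop :=
  EffectiveDescentMorphism (terminal.from P.A) ∧
    IsIso (prod.lift (InternalGroup.act P) prod.snd)

/-- The functor `C ⥤ C/P` sending `X` to the projection `P ⨯ X ⟶ P`. -/
def projFunctor (P : C) : C ⥤ Over P where
  obj X := Over.mk (prod.fst : P ⨯ X ⟶ P)
  map {X Y} f := Over.homMk (prod.map (𝟙 P) f) (by simp)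
  map_id X := by ext; dsimp; simp
  map_comp f g := by ext; dsimp; simp

theorem cofork_condition (Gr : InternalGroup C) (P : InternalGroup.GObject Gr) (X : C) :
    ((prod.associator Gr.G P.A X).inv ≫ prod.map (InternalGroup.act P) (𝟙 X)) ≫
        (prod.snd : P.A ⨯ X ⟶ X)
      = (prod.snd : Gr.G ⨯ (P.A ⨯ X) ⟶ P.A ⨯ X) ≫ prod.snd := by
  simp

/-- The object `G ⨯ X` of `C/X` underlying the internal group induced by `G` in `C/X`. -/
def overG (Gr : InternalGroup C) (X : C) : Over X := Over.mk (prod.snd : Gr.G ⨯ X ⟶ X)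

section OverGroup

variable {Gr : InternalGroup C} {X : C}

/-- The `G`-component of a morphism into `G ⨯ X` over `X`. -/
abbrev toG {A : Over X} (u : A ⟶ overG Gr X) : A.left ⟶ Gr.G := u.left ≫ prod.fst

theorem homGX_ext {A : Over X} {u v : A ⟶ overG Gr X} (h : toG u = toG v) : u = v := by
  ext
  apply Limits.prod.hom_ext
  · exact h
  · have hu := Over.w u
    have hv := Over.w v
    dsimp [overG] at hu hv
    rw [hu, hv]

theorem toG_comp {A B : Over X} (w : A ⟶ B) (u : B ⟶ overG Gr X) :
    toG (w ≫ u) = w.left ≫ toG u := by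
  dsimp [toG]
  exact Category.assoc _ _ _

variable (Gr X)

/-- The multiplication `m ⨯ id_X : (G ⨯ G) ⨯ X ⟶ G ⨯ X` of the induced group in `C/X`,
viewing `(G ⨯ X) ⨯_X (G ⨯ X) ≅ (G ⨯ G) ⨯ X`. -/
def overMul : overG Gr X ⨯ overG Gr X ⟶ overG Gr X :=
  Over.homMk
    (prod.lift
      (prod.lift (toG (prod.fst : overG Gr X ⨯ overG Gr X ⟶ overG Gr X))
        (toG (prod.snd : overG Gr X ⨯ overG Gr X ⟶ overG Gr X)) ≫ Gr.m)
      (overG Gr X ⨯ overG Gr X).hom)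
    (by simp [overG])

/-- The unit `(e ∘ !, id_X) : X ⟶ G ⨯ X` of the induced group in `C/X`. -/
def overOne : ⊤_ (Over X) ⟶ overG Gr X :=
  Over.homMk (prod.lift (terminal.from (⊤_ Over X).left ≫ Gr.e) (⊤_ Over X).hom)
    (by simp [overG])

/-- The inverse `i ⨯ id_X : G ⨯ X ⟶ G ⨯ X` of the induced group in `C/X`. -/
def overInv : overG Gr X ⟶ overG Gr X :=
  Over.homMk (prod.map Gr.i (𝟙 X)) (by simp [overG])

variable {Gr X}

theorem toG_overMul {A : Over X} (u : A ⟶ overG Gr X ⨯ overG Gr X) :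
    toG (u ≫ overMul Gr X)
      = prod.lift (toG (u ≫ prod.fst)) (toG (u ≫ prod.snd)) ≫ Gr.m := by
  rw [toG_comp]
  dsimp [overMul, toG]
  erw [prod.lift_fst, prod.comp_lift_assoc]
  erw [Category.assoc, Category.assoc]

theorem toG_overOne {A : Over X} (u : A ⟶ ⊤_ (Over X)) :
    toG (u ≫ overOne Gr X) = terminal.from A.left ≫ Gr.e := by
  rw [toG_comp]
  dsimp [overOne, toG]
  erw [prod.lift_fst, ← Category.assoc, terminal.comp_from]

end OverGroup

/-- The internal group `G ⨯ X` in the slice category `C/X` induced by an internal group `G`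
of `C`: its multiplication is induced by `m ⨯ id_X`, its unit by `(e ∘ !, id_X)` and its
inverse by `i ⨯ id_X`. -/
def inducedGroup (Gr : InternalGroup C) (X : C) : InternalGroup (Over X) where
  G := overG Gr X
  m := overMul Gr X
  e := overOne Gr X
  i := overInv Gr X
  one_mul' := by
    apply homGX_ext
    rw [toG_overMul, prod.lift_fst, prod.lift_snd, toG_overOne]
    simp only [toG, Over.id_left]
    erw [Category.id_comp]
    exact Gr.one_mul_elt (prod.fst : Gr.G ⨯ X ⟶ Gr.G)
  mul_one' := by
    apply homGX_ext
    rw [toG_overMul, prod.lift_fst, prod.lift_snd, toG_overOne]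
    simp only [toG, Over.id_left]
    erw [Category.id_comp]
    exact Gr.mul_one_elt (prod.fst : Gr.G ⨯ X ⟶ Gr.G)
  mul_assoc' := by
    apply homGX_ext
    have l1 : ((prod.associator (overG Gr X) (overG Gr X) (overG Gr X)).inv ≫
          prod.map (overMul Gr X) (𝟙 (overG Gr X))) ≫ prod.fst
        = prod.lift prod.fst (prod.snd ≫ prod.fst) ≫ overMul Gr X := by
      rw [Category.assoc, prod.map_fst, ← Category.assoc]
      congr 1
      simp
    have l2 : ((prod.associator (overG Gr X) (overG Gr X) (overG Gr X)).inv ≫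
          prod.map (overMul Gr X) (𝟙 (overG Gr X))) ≫ prod.snd
        = prod.snd ≫ prod.snd := by
      rw [Category.assoc, prod.map_snd, Category.comp_id]
      simp
    have l3 : prod.map (𝟙 (overG Gr X)) (overMul Gr X) ≫
          (prod.fst : overG Gr X ⨯ overG Gr X ⟶ overG Gr X) = prod.fst := by
      rw [prod.map_fst, Category.comp_id]
    have l4 : prod.map (𝟙 (overG Gr X)) (overMul Gr X) ≫
          (prod.snd : overG Gr X ⨯ overG Gr X ⟶ overG Gr X)
        = prod.snd ≫ overMul Gr X := by
      rw [prod.map_snd]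
    rw [← Category.assoc, toG_overMul, l1, l2, toG_overMul, prod.lift_fst, prod.lift_snd]
    rw [toG_overMul, l3, l4, toG_overMul]
    exact Gr.mul_assoc_elt _ _ _
  inv_mul' := by
    apply homGX_ext
    rw [toG_overMul, prod.lift_fst, prod.lift_snd, toG_overOne]
    have hi : toG (overInv Gr X) = prod.fst ≫ Gr.i := by
      dsimp [overInv, toG]
      exact prod.map_fst _ _
    rw [hi]
    simp only [toG, Over.id_left]
    erw [Category.id_comp]
    exact Gr.inv_mul_elt (prod.fst : Gr.G ⨯ X ⟶ Gr.G)
  mul_inv' := by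
    apply homGX_ext
    rw [toG_overMul, prod.lift_fst, prod.lift_snd, toG_overOne]
    have hi : toG (overInv Gr X) = prod.fst ≫ Gr.i := by
      dsimp [overInv, toG]
      exact prod.map_fst _ _
    rw [hi]
    simp only [toG, Over.id_left]
    erw [Category.id_comp]
    exact Gr.mul_inv_elt (prod.fst : Gr.G ⨯ X ⟶ Gr.G)

/-- A principal `G`-bundle over an object `X` of `C`: a `G`-object `(P, p)` with an
action-invariant morphism `f : P ⟶ X` which is an effective descent morphism and such that
`(p, π₂) : G ⨯ P ⟶ P ⨯_X P` is an isomorphism. -/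
structure PrincipalBundleOver (Gr : InternalGroup C) (X : C) where
  P : InternalGroup.GObject Gr
  f : P.A ⟶ X
  invariant : InternalGroup.act P ≫ f = prod.snd ≫ f
  descent : EffectiveDescentMorphism f
  torsor : IsIso (pullback.lift (InternalGroup.act P) prod.snd invariant)

namespace PrincipalBundleOver

variable {Gr : InternalGroup C} {X : C}

/-- A morphism of principal `G`-bundles over `X`: a `G`-homomorphism over `X`. -/
@[ext]
structure Hom (P Q : PrincipalBundleOver Gr X) where
  hom : P.P ⟶ Q.P
  w : hom.f ≫ Q.f = P.f

/-- The category of principal `G`-bundles over `X`. -/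
instance : Category (PrincipalBundleOver Gr X) where
  Hom P Q := Hom P Q
  id P := ⟨𝟙 P.P, by rw [Monad.Algebra.id_f]; simp⟩
  comp u v := ⟨u.hom ≫ v.hom, by rw [Monad.Algebra.comp_f, Category.assoc, v.w, u.w]⟩
  id_comp u := by apply Hom.ext; simp
  comp_id u := by apply Hom.ext; simp
  assoc u v w := by apply Hom.ext; simp

end PrincipalBundleOver

/-- The category of adjunctions `L ⊣ R : C ⇄ [G, C]` over `C` (i.e. `Σ_G ∘ L ≅ Id_C`)
satisfying Frobenius reciprocity; morphisms are natural transformations between the left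
adjoints. -/
structure FrobAdjObj (Gr : InternalGroup C) (SG : InternalGroup.GObject Gr ⥤ C) where
  L : C ⥤ InternalGroup.GObject Gr
  R : InternalGroup.GObject Gr ⥤ C
  adj : L ⊣ R
  isOver : Nonempty (L ⋙ SG ≅ 𝟭 C)
  frob : IsFrobenius adj

/-- A morphism of adjunctions over `C`: a natural transformation between the left adjoints. -/
@[ext]
structure FrobAdjHom {Gr : InternalGroup C} {SG : InternalGroup.GObject Gr ⥤ C}
    (A B : FrobAdjObj Gr SG) where
  nat : A.L ⟶ B.L

instance (Gr : InternalGroup C) (SG : InternalGroup.GObject Gr ⥤ C) :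
    Category (FrobAdjObj Gr SG) where
  Hom A B := FrobAdjHom A B
  id A := ⟨𝟙 A.L⟩
  comp u v := ⟨u.nat ≫ v.nat⟩
  id_comp u := by apply FrobAdjHom.ext; simp
  comp_id u := by apply FrobAdjHom.ext; simp
  assoc u v w := by apply FrobAdjHom.ext; simp

/-- The category of adjunctions `L ⊣ R : C/X ⇄ [G, C]` over `C` (i.e. `Σ_G ∘ L ≅ Σ_X`)
that are stably Frobenius; morphisms are natural transformations between the left adjoints. -/
structure StablyFrobAdjOver (Gr : InternalGroup C) (SG : InternalGroup.GObject Gr ⥤ C)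
    (X : C) where
  L : Over X ⥤ InternalGroup.GObject Gr
  R : InternalGroup.GObject Gr ⥤ Over X
  adj : L ⊣ R
  isOver : Nonempty (L ⋙ SG ≅ Over.forget X)
  frob : IsStablyFrobenius adj

/-- A morphism of adjunctions over `C`: a natural transformation between the left adjoints. -/
@[ext]
structure StablyFrobAdjHom {Gr : InternalGroup C} {SG : InternalGroup.GObject Gr ⥤ C} {X : C}
    (A B : StablyFrobAdjOver Gr SG X) where
  nat : A.L ⟶ B.L

instance (Gr : InternalGroup C) (SG : InternalGroup.GObject Gr ⥤ C) (X : C) :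
    Category (StablyFrobAdjOver Gr SG X) where
  Hom A B := StablyFrobAdjHom A B
  id A := ⟨𝟙 A.L⟩
  comp u v := ⟨u.nat ≫ v.nat⟩
  id_comp u := by apply StablyFrobAdjHom.ext; simp
  comp_id u := by apply StablyFrobAdjHom.ext; simp
  assoc u v w := by apply StablyFrobAdjHom.ext; simp

end PrincipalBundles

open PrincipalBundles PrincipalBundles.InternalGroup
open CategoryTheory CategoryTheory.Limits

/-!
Only (2) ⇒ (1) needs an argument. Put `P = L 1`, `A = G* Σ_G P` (which is `G* X`, as
`Σ_G L = Σ_X`) and let `p : P ⟶ A` be the unit of `Σ_G ⊣ G*`. Frobenius reciprocity of the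
slice at `A` says that `L` turns every pullback `R Y ×_{R A} W` into the pullback `Y ×_A L W`.

Applied to the naturality square of the unit of `Σ_X ⊣ R G*` at `W ⟶ 1`, a pullback because
`Σ_X` is the domain functor, it gives `L W ≅ G* W ×_{G* X} P`: the unit `L ⟶ G* Σ_G L` is
cartesian, so `L` preserves pullbacks because `G* Σ_G L = G* Σ_X` does. Applied to the graph of
`1 ⟶ R A` in `R Y × R A ≅ R (Y × A)`, it gives `L R Y ≅ Y × P`, so the counit of `L ⊣ R` is
cartesian. Pasting the image under `L` of a pullback `R Y ×_{R A'} W` with the counit square at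
`Y ⟶ A'` yields Frobenius reciprocity at every `A'`.
-/

namespace CategoryTheory.IsPullback

variable {𝒞 : Type*} [Category 𝒞]

theorem comp_iff_isIso {P Q X₁ X₂ B : 𝒞} {p₁ : P ⟶ X₁} {p₂ : P ⟶ X₂} {f : X₁ ⟶ B}
    {g : X₂ ⟶ B} (hp : IsPullback p₁ p₂ f g) (c : Q ⟶ P) :
    IsPullback (c ≫ p₁) (c ≫ p₂) f g ↔ IsIso c := by
  refine ⟨fun hq => ?_, fun _ => ?_⟩
  · have : c = (hq.isoIsPullback _ _ hp).hom := hp.hom_ext (by simp) (by simp)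
    rw [this]
    infer_instance
  · exact hp.of_iso (asIso c).symm (Iso.refl _) (Iso.refl _) (Iso.refl _) (by simp) (by simp)
      (by simp) (by simp)

theorem map_comp_of_isPullback {𝒟 : Type*} [Category 𝒟] (F : 𝒞 ⥤ 𝒟) {P Q X₁ X₂ B : 𝒞}
    {p₁ : P ⟶ X₁} {p₂ : P ⟶ X₂} {q₁ : Q ⟶ X₁} {q₂ : Q ⟶ X₂} {f : X₁ ⟶ B} {g : X₂ ⟶ B}
    (hp : IsPullback p₁ p₂ f g) (hq : IsPullback q₁ q₂ f g) {Y Z : 𝒟} {a : F.obj X₁ ⟶ Y}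
    {b : Y ⟶ Z} {c : F.obj X₂ ⟶ Z} (h : IsPullback (F.map p₁ ≫ a) (F.map p₂) b c) :
    IsPullback (F.map q₁ ≫ a) (F.map q₂) b c := by
  have := (h.comp_iff_isIso (F.map (hq.isoIsPullback _ _ hp).hom)).mpr inferInstance
  simpa only [← F.map_comp_assoc, ← F.map_comp, isoIsPullback_hom_fst, isoIsPullback_hom_snd]
    using this

theorem lift_isTerminal {T Y B Z : 𝒞} (t : IsTerminal T) {π₁ : Z ⟶ Y} {π₂ : Z ⟶ B}
    (hZ : IsPullback π₁ π₂ (t.from Y) (t.from B)) (δ : T ⟶ B) :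
    IsPullback (hZ.lift (𝟙 Y) (t.from Y ≫ δ) (t.hom_ext _ _)) (t.from Y) π₂ δ := by
  refine IsPullback.of_right ?_ (hZ.lift_snd _ _ _) hZ
  rw [hZ.lift_fst, t.hom_ext (δ ≫ t.from B) (𝟙 T)]
  exact IsPullback.of_id_fst

theorem map_of_isPullback_app {𝒟 : Type*} [Category 𝒟] {F G : 𝒞 ⥤ 𝒟}
    (α : ∀ A, F.obj A ⟶ G.obj A)
    (hα : ∀ {A B : 𝒞} (u : A ⟶ B), IsPullback (α A) (F.map u) (G.map u) (α B))
    {Q A₁ A₂ A₃ : 𝒞} {q₁ : Q ⟶ A₁} {q₂ : Q ⟶ A₂} {m : A₁ ⟶ A₃} {w : A₂ ⟶ A₃}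
    (hq : CommSq q₁ q₂ m w) (hG : IsPullback (G.map q₁) (G.map q₂) (G.map m) (G.map w)) :
    IsPullback (F.map q₁) (F.map q₂) (F.map m) (F.map w) := by
  have hbig := (hα q₂).paste_horiz hG
  rw [(hα q₁).w, (hα w).w] at hbig
  exact hbig.of_right (hq.map F).w (hα m)

end CategoryTheory.IsPullback

namespace CategoryTheory.Adjunction

variable {D : Type*} [Category D] {E : Type*} [Category E] [HasTerminal E] {L : D ⥤ E}
  {R : E ⥤ D} (adj : L ⊣ R)

theorem isPullback_counit_naturality {T : D} (t : IsTerminal T)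
    (h : ∀ Y : E, IsPullback (adj.counit.app Y) (L.map (t.from (R.obj Y))) (terminal.from Y)
      (terminal.from (L.obj T)))
    {Y A : E} (y : Y ⟶ A) :
    IsPullback (adj.counit.app Y) (L.map (R.map y)) y (adj.counit.app A) := by
  refine IsPullback.of_bot ?_ (adj.counit_naturality y).symm (h A)
  rw [← L.map_comp, t.hom_ext (R.map y ≫ t.from _) (t.from _), terminal.comp_from]
  exact h Y

end CategoryTheory.Adjunction

namespace CategoryTheory.Over

theorem isPullback_unit_app_of_eq_forget {C : Type*} [Category C] {X : C} {F : Over X ⥤ C}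
    {G : C ⥤ Over X} (adj : F ⊣ G) (hF : F = Over.forget X) (W : Over X) :
    IsPullback (adj.unit.app W) (Over.mkIdTerminal.from W)
      (G.map (F.map (Over.mkIdTerminal.from W))) (adj.unit.app (Over.mk (𝟙 X))) := by
  subst hF
  have hunit (Z : Over X) : (adj.homEquiv Z _).symm (adj.unit.app Z) = 𝟙 _ := by
    rw [adj.homEquiv_counit]
    exact adj.left_triangle_components Z
  refine ⟨⟨(adj.unit.naturality _).symm⟩, ⟨PullbackCone.IsLimit.mk _
    (fun s => Over.homMk ((adj.homEquiv _ _).symm s.fst) ?_) (fun s => ?_)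
    (fun s => Over.mkIdTerminal.hom_ext _ _) (fun s m hm _ => ?_)⟩⟩
  · have hcond := congrArg (adj.homEquiv _ _).symm s.condition
    rw [adj.homEquiv_naturality_right_symm, adj.homEquiv_naturality_left_symm, hunit,
      Category.comp_id] at hcond
    simp only [Over.forget_map, Over.mkIdTerminal_from_left] at hcond
    exact hcond.trans (by simpa using Over.w s.snd)
  · exact (adj.unit_naturality _).symm.trans
      ((adj.homEquiv_unit _ _ _).symm.trans ((adj.homEquiv _ _).apply_symm_apply _))
  · ext
    exact (adj.homEquiv _ _).eq_symm_apply.mpr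
      ((adj.homEquiv_unit _ _ _).trans ((adj.unit_naturality m).trans hm))

end CategoryTheory.Over

namespace PrincipalBundles

section SlicedFrobenius

variable {D : Type*} [Category D] [HasFiniteLimits D] {E : Type*} [Category E] [HasFiniteLimits E]
  {L : D ⥤ E} {R : E ⥤ D} (adj : L ⊣ R)

theorem frobMap_slicedAdj_left_fst (A : E) (W : Over (R.obj A)) (Y : Over A) :
    (frobMap (slicedAdj adj A) W Y).left ≫ (prod.fst : Y ⨯ (slicedL adj A).obj W ⟶ Y).left =
      L.map (prod.fst : (slicedR adj A).obj Y ⨯ W ⟶ _).left ≫ adj.counit.app Y.left := by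
  rw [← Over.comp_left, frobMap, prod.lift_fst]
  simp [slicedAdj, slicedL, slicedR, Adjunction.homEquiv_counit]

theorem frobMap_slicedAdj_left_snd (A : E) (W : Over (R.obj A)) (Y : Over A) :
    (frobMap (slicedAdj adj A) W Y).left ≫ (prod.snd : Y ⨯ (slicedL adj A).obj W ⟶ _).left =
      L.map (prod.snd : (slicedR adj A).obj Y ⨯ W ⟶ W).left := by
  rw [← Over.comp_left, frobMap, prod.lift_snd]
  rfl

theorem isIso_frobMap_slicedAdj_iff (A : E) (W : Over (R.obj A)) (Y : Over A) :
    IsIso (frobMap (slicedAdj adj A) W Y) ↔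
      IsPullback (L.map (prod.fst : (slicedR adj A).obj Y ⨯ W ⟶ _).left ≫ adj.counit.app Y.left)
        (L.map (prod.snd : (slicedR adj A).obj Y ⨯ W ⟶ W).left) Y.hom
        (L.map W.hom ≫ adj.counit.app A) := by
  have htgt : IsPullback (prod.fst : Y ⨯ (slicedL adj A).obj W ⟶ Y).left
      (prod.snd : Y ⨯ (slicedL adj A).obj W ⟶ _).left Y.hom (L.map W.hom ≫ adj.counit.app A) :=
    Over.isPullback_of_binaryFan_isLimit _ (limit.isLimit _)
  have key := htgt.comp_iff_isIso (frobMap (slicedAdj adj A) W Y).left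
  rw [frobMap_slicedAdj_left_fst, frobMap_slicedAdj_left_snd] at key
  exact Iff.trans ⟨fun _ => (Over.forget A).map_isIso _,
    fun _ => isIso_of_reflects_iso _ (Over.forget A)⟩ key.symm

theorem isFrobenius_slicedAdj_iff (A : E) :
    IsFrobenius (slicedAdj adj A) ↔
      ∀ {Y : E} (y : Y ⟶ A) {Q W : D} (w : W ⟶ R.obj A) (q₁ : Q ⟶ R.obj Y) (q₂ : Q ⟶ W),
        IsPullback q₁ q₂ (R.map y) w →
          IsPullback (L.map q₁ ≫ adj.counit.app Y) (L.map q₂) y (L.map w ≫ adj.counit.app A) := by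
  refine ⟨fun h Y y Q W w q₁ q₂ hq => ?_, fun h W Y => ?_⟩
  · have hsrc : IsPullback (prod.fst : (slicedR adj A).obj (Over.mk y) ⨯ Over.mk w ⟶ _).left
        (prod.snd : (slicedR adj A).obj (Over.mk y) ⨯ Over.mk w ⟶ _).left (R.map y) w :=
      Over.isPullback_of_binaryFan_isLimit _ (limit.isLimit _)
    have hprod := (isIso_frobMap_slicedAdj_iff adj A (Over.mk w) (Over.mk y)).mp (h _ _)
    exact hsrc.map_comp_of_isPullback L hq hprod
  · exact (isIso_frobMap_slicedAdj_iff adj A W Y).mpr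
      (h Y.hom W.hom _ _ (Over.isPullback_of_binaryFan_isLimit _ (limit.isLimit _)))

end SlicedFrobenius

section OverAdjunction

variable {C : Type*} [Category C] [HasFiniteLimits C] {ℰ : Type*} [Category ℰ] [HasFiniteLimits ℰ]
  {S : ℰ ⥤ C} {Δ : C ⥤ ℰ} (sadj : S ⊣ Δ) {X : C} {L : Over X ⥤ ℰ} {R : ℰ ⥤ Over X}
  (adj : L ⊣ R) (hover : L ⋙ S = Over.forget X)

include hover in
theorem isPullback_unit_app_map_toTerminal
    (h : IsFrobenius (slicedAdj adj (Δ.obj (S.obj (L.obj (Over.mk (𝟙 X)))))))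
    (W : Over X) :
    IsPullback (sadj.unit.app (L.obj W)) (L.map (Over.mkIdTerminal.from W))
      (Δ.map (S.map (L.map (Over.mkIdTerminal.from W))))
      (sadj.unit.app (L.obj (Over.mk (𝟙 X)))) := by
  simpa [Adjunction.comp_unit_app] using (isFrobenius_slicedAdj_iff adj _).mp h _ _ _ _
    (Over.isPullback_unit_app_of_eq_forget (adj.comp sadj) hover W)

include hover in
theorem isPullback_unit_app_map
    (h : IsFrobenius (slicedAdj adj (Δ.obj (S.obj (L.obj (Over.mk (𝟙 X)))))))
    {W W' : Over X} (u : W ⟶ W') :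
    IsPullback (sadj.unit.app (L.obj W)) (L.map u) (Δ.map (S.map (L.map u)))
      (sadj.unit.app (L.obj W')) := by
  refine IsPullback.of_bot ?_ (sadj.unit.naturality (L.map u)).symm
    (isPullback_unit_app_map_toTerminal sadj adj hover h W')
  simp only [← Functor.map_comp]
  rw [Over.mkIdTerminal.hom_ext (u ≫ _) (Over.mkIdTerminal.from W)]
  exact isPullback_unit_app_map_toTerminal sadj adj hover h W

include sadj hover in
theorem isPullback_map_of_isFrobenius
    (h : IsFrobenius (slicedAdj adj (Δ.obj (S.obj (L.obj (Over.mk (𝟙 X)))))))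
    {Q A₁ A₂ A₃ : Over X} {q₁ : Q ⟶ A₁} {q₂ : Q ⟶ A₂} {m : A₁ ⟶ A₃} {w : A₂ ⟶ A₃}
    (hq : IsPullback q₁ q₂ m w) : IsPullback (L.map q₁) (L.map q₂) (L.map m) (L.map w) := by
  have := sadj.isRightAdjoint
  have hS : IsPullback ((L ⋙ S).map q₁) ((L ⋙ S).map q₂) ((L ⋙ S).map m) ((L ⋙ S).map w) := by
    rw [hover]
    exact hq.map (Over.forget X)
  exact IsPullback.map_of_isPullback_app (G := L ⋙ S ⋙ Δ) _
    (isPullback_unit_app_map sadj adj hover h) hq.toCommSq (hS.map Δ)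

include sadj in
theorem isPullback_counit_app_toTerminal
    (h : IsFrobenius (slicedAdj adj (Δ.obj (S.obj (L.obj (Over.mk (𝟙 X)))))))
    (Y : ℰ) :
    IsPullback (adj.counit.app Y) (L.map (Over.mkIdTerminal.from (R.obj Y))) (terminal.from Y)
      (terminal.from (L.obj (Over.mk (𝟙 X)))) := by
  have := adj.isRightAdjoint
  set A := Δ.obj (S.obj (L.obj (Over.mk (𝟙 X))))
  have hRprod : IsPullback (R.map (prod.fst : Y ⨯ A ⟶ Y)) (R.map prod.snd)
      (Over.mkIdTerminal.from _) (Over.mkIdTerminal.from _) :=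
    IsPullback.of_is_product (isLimitOfHasBinaryProductOfPreservesLimit R Y A) Over.mkIdTerminal
  have hgraph := hRprod.lift_isTerminal Over.mkIdTerminal ((adj.comp sadj).unit.app (Over.mk (𝟙 X)))
  have hsnd := (isFrobenius_slicedAdj_iff adj A).mp h prod.snd _ _ _ hgraph
  have hprod := hsnd.paste_horiz (IsPullback.of_hasBinaryProduct' Y A)
  have hfst (q : R.obj Y ⟶ R.obj (Y ⨯ A)) (hq : q ≫ R.map prod.fst = 𝟙 _) :
      L.map q ≫ adj.counit.app (Y ⨯ A) ≫ prod.fst = adj.counit.app Y := by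
    rw [← adj.counit_naturality (prod.fst : Y ⨯ A ⟶ Y), ← L.map_comp_assoc, hq, L.map_id,
      Category.id_comp]
  rwa [Category.assoc, hfst _ (hRprod.lift_fst _ _ _), terminal.comp_from] at hprod

include sadj hover in
theorem isStablyFrobenius_of_isFrobenius
    (h : IsFrobenius (slicedAdj adj (Δ.obj (S.obj (L.obj (Over.mk (𝟙 X))))))) :
    IsStablyFrobenius adj := fun _ =>
  (isFrobenius_slicedAdj_iff adj _).mpr fun y _ _ _ _ _ hq =>
    (isPullback_map_of_isFrobenius sadj adj hover h hq).paste_horiz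
      (adj.isPullback_counit_naturality Over.mkIdTerminal
        (isPullback_counit_app_toTerminal sadj adj h) y)

end OverAdjunction

end PrincipalBundles

theorem statement18_general {C : Type u} [Category.{v} C] [HasFiniteLimits C] (Gr : InternalGroup C)
    (SG : GObject Gr ⥤ C) (SGadj : SG ⊣ trivAction Gr)
    (X : C) (L : Over X ⥤ GObject Gr) (R : GObject Gr ⥤ Over X) (adj : L ⊣ R)
    (hover : L ⋙ SG = Over.forget X) :
    (IsStablyFrobenius adj ↔ IsFrobenius (slicedAdj adj ((trivAction Gr).obj X))) ∧
    (IsStablyFrobenius adj ↔ ∀ Z : C, IsFrobenius (slicedAdj adj ((trivAction Gr).obj Z))) := by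
  have hP : SG.obj (L.obj (Over.mk (𝟙 X))) = X := by
    rw [← Functor.comp_obj, hover]
    rfl
  have key (h : IsFrobenius (slicedAdj adj ((trivAction Gr).obj X))) : IsStablyFrobenius adj :=
    isStablyFrobenius_of_isFrobenius SGadj adj hover (by rwa [hP])
  exact ⟨⟨fun h => h _, key⟩, ⟨fun h _ => h _, fun h => key (h X)⟩⟩

/-- Suppose `Σ_G ⊣ G*` is stably Frobenius and `L ⊣ R : C/X ⇄ [G, C]` is an
adjunction over `C`.  Then the following are equivalent: (1) `L ⊣ R` is stably Frobenius;
(2) the sliced adjunction at `G* X` satisfies Frobenius reciprocity; (3) the sliced adjunction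
at `G* Z` satisfies Frobenius reciprocity for every object `Z` of `C`. -/
theorem statement18 {C : Type u} [Category.{v} C] [HasFiniteLimits C] (Gr : InternalGroup C)
    (SG : GObject Gr ⥤ C) (SGadj : SG ⊣ trivAction Gr) (hSG : IsStablyFrobenius SGadj)
    (X : C) (L : Over X ⥤ GObject Gr) (R : GObject Gr ⥤ Over X) (adj : L ⊣ R)
    (hover : L ⋙ SG = Over.forget X) :
    (IsStablyFrobenius adj ↔ IsFrobenius (slicedAdj adj ((trivAction Gr).obj X))) ∧
    (IsStablyFrobenius adj ↔ ∀ Z : C, IsFrobenius (slicedAdj adj ((trivAction Gr).obj Z))) :=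
  statement18_general Gr SG SGadj X L R adj hover
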